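/- (Katz–Trevisan PIR bound.) There exists a universal constant K such that for all n, t, ℓ ≥ 1, every one-round 2-server private information retrieval scheme for n-bit databases with query size t, answer size ℓ, perfect recovery (ε = 1/2) and perfect privacy (η = 0) satisfies t ≥ 2·log₂(n/ℓ) − K. -/

import Mathlib

/-- A one-round 2-server private information retrieval scheme for `n`-bit databases
with query size `t` and answer size `ℓ`: a finite probability space `Fin R` with
weights `pr` (the user's randomness), query functions `q1, q2`, the two servers'
answer functions `ans1, ans2`, and the user's output functions `out`. -/
structure PIRScheme (n t ℓ : ℕ) where
  R : ℕ
  pr : Fin R → ℝ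
  q1 : Fin n → Fin R → Fin t → Bool
  q2 : Fin n → Fin R → Fin t → Bool
  ans1 : (Fin n → Bool) → (Fin t → Bool) → Fin ℓ → Bool
  ans2 : (Fin n → Bool) → (Fin t → Bool) → Fin ℓ → Bool
  out : Fin n → Fin R → (Fin ℓ → Bool) → (Fin ℓ → Bool) → Bool

/-- The user's randomness is a probability distribution. -/
def PIRScheme.ProbDist {n t ℓ : ℕ} (P : PIRScheme n t ℓ) : Prop :=
  (∀ r, 0 ≤ P.pr r) ∧ ∑ r, P.pr r = 1

/-- Recovery probability at least `1/2 + ε`: for every database `x` and index `i`, the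
user outputs `x_i` with probability at least `1/2 + ε`. -/
def PIRScheme.Correct {n t ℓ : ℕ} (P : PIRScheme n t ℓ) (ε : ℝ) : Prop :=
  ∀ (x : Fin n → Bool) (i : Fin n),
    1 / 2 + ε ≤
      ∑ r ∈ Finset.univ.filter
        (fun r => P.out i r (P.ans1 x (P.q1 i r)) (P.ans2 x (P.q2 i r)) = x i),
        P.pr r

/-- `(1-η)`-security: for each server, the distributions of the query induced by any
two indices `i1, i2` are within total variation distance `η`. -/
def PIRScheme.Secure {n t ℓ : ℕ} (P : PIRScheme n t ℓ) (η : ℝ) : Prop :=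
  ∀ i1 i2 : Fin n,
    (1 / 2) * ∑ q : Fin t → Bool,
      |(∑ r ∈ Finset.univ.filter (fun r => P.q1 i1 r = q), P.pr r) -
        (∑ r ∈ Finset.univ.filter (fun r => P.q1 i2 r = q), P.pr r)| ≤ η ∧
    (1 / 2) * ∑ q : Fin t → Bool,
      |(∑ r ∈ Finset.univ.filter (fun r => P.q2 i1 r = q), P.pr r) -
        (∑ r ∈ Finset.univ.filter (fun r => P.q2 i2 r = q), P.pr r)| ≤ η

/-- The scheme uses only `b` (predetermined, depending on `i` and `r`) bits of each of
the two `ℓ`-bit answers. -/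
def PIRScheme.UsesBits {n t ℓ : ℕ} (P : PIRScheme n t ℓ) (b : ℕ) : Prop :=
  ∀ (i : Fin n) (r : Fin P.R),
    ∃ S0 S1 : Finset (Fin ℓ), S0.card = b ∧ S1.card = b ∧
      ∀ a0 a1 a0' a1' : Fin ℓ → Bool,
        (∀ k ∈ S0, a0 k = a0' k) → (∀ k ∈ S1, a1 k = a1' k) →
          P.out i r a0 a1 = P.out i r a0' a1'

/-!
Perfect correctness makes every query pair in the support of the joint query distribution
`D_i` of index `i` a decoder for `x_i`, and perfect privacy makes the marginals `p₁, p₂` of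
`D_i` independent of `i`. Splitting each query `a` into about `m·p(a)` copies (`m = 2^t`)
spreads `D_i` over an array whose rows and columns carry mass at most `1/m`, so its support
contains a matching of size `m/2` (a maximal matching meets every edge of the support). Keep
every copy independently with probability `1/√m`: each index is then decodable from the kept
answers with probability at least `1 - (1 - 1/m)^(m/2) ≥ 1/3`, while the about `4√m` kept
answers carry only `ℓ` bits each. Counting databases gives `n/3 ≤ 4ℓ√m`, that is
`t ≥ 2 log₂(n/ℓ) - 8`.
-/

open Finset

section Matching

variable {α β : Type*}

def IsMatching (M : Finset (α × β)) : Prop :=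
  Set.InjOn Prod.fst (M : Set (α × β)) ∧ Set.InjOn Prod.snd (M : Set (α × β))

theorem IsMatching.insert [DecidableEq α] [DecidableEq β] {M : Finset (α × β)}
    (hM : IsMatching M) {e : α × β} (h1 : e.1 ∉ M.image Prod.fst) (h2 : e.2 ∉ M.image Prod.snd) :
    IsMatching (insert e M) := by
  rw [← mem_coe, coe_image] at h1 h2
  simp only [IsMatching, coe_insert, Set.injOn_insert (fun he => h1 (Set.mem_image_of_mem _ he))]
  exact ⟨⟨hM.1, h1⟩, ⟨hM.2, h2⟩⟩

variable [Fintype α] [Fintype β]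

theorem exists_isMatching_sum_le (W : α → β → ℝ) (hW : ∀ a b, 0 ≤ W a b) (θ : ℝ)
    (hrow : ∀ a, ∑ b, W a b ≤ θ) (hcol : ∀ b, ∑ a, W a b ≤ θ) :
    ∃ M : Finset (α × β), IsMatching M ∧ (∀ e ∈ M, W e.1 e.2 ≠ 0) ∧
      ∑ a, ∑ b, W a b ≤ 2 * θ * #M := by
  classical
  obtain ⟨M, hM', hmax⟩ := ({M | IsMatching M ∧ ∀ e ∈ M, W e.1 e.2 ≠ 0} :
      Finset (Finset (α × β))).exists_max_image card ⟨∅, by simp [IsMatching]⟩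
  simp only [mem_filter, mem_univ, true_and] at hM' hmax
  obtain ⟨hM, hWM⟩ := hM'
  refine ⟨M, hM, hWM, ?_⟩
  set A := M.image Prod.fst
  set B := M.image Prod.snd
  have hcover : ∀ a b, W a b ≠ 0 → a ∈ A ∨ b ∈ B := by
    intro a b hab
    by_contra! h
    have hnot : (a, b) ∉ M := fun hm => h.1 (mem_image_of_mem _ hm)
    have := hmax (insert (a, b) M)
      ⟨hM.insert h.1 h.2, forall_mem_insert _ _ _ |>.mpr ⟨hab, hWM⟩⟩
    rw [card_insert_of_notMem hnot] at this
    omega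
  calc ∑ a, ∑ b, W a b
      ≤ ∑ a, ∑ b, ((if a ∈ A then W a b else 0) + if b ∈ B then W a b else 0) := by
        gcongr with a _ b _
        rcases eq_or_ne (W a b) 0 with hab | hab
        · simp [hab]
        · rcases hcover a b hab with h | h <;> split_ifs <;> linarith [hW a b]
    _ = ∑ a ∈ A, ∑ b, W a b + ∑ b ∈ B, ∑ a, W a b := by
        simp only [sum_add_distrib, sum_ite_irrel, sum_const_zero, sum_ite_mem, univ_inter]
        exact congrArg _ sum_comm
    _ ≤ #A * θ + #B * θ := by
        gcongr
        · simpa using sum_le_card_nsmul A _ θ fun a _ => hrow a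
        · simpa using sum_le_card_nsmul B _ θ fun b _ => hcol b
    _ = 2 * θ * #M := by
        rw [card_image_of_injOn hM.1, card_image_of_injOn hM.2]
        ring

end Matching

theorem one_sub_pow_le_two_thirds {x : ℝ} {k : ℕ} (hx : x ≤ 1)
    (hk : 1 / 2 ≤ k * x) : (1 - x) ^ k ≤ 2 / 3 := by
  calc (1 - x) ^ k ≤ Real.exp (-x) ^ k :=
        pow_le_pow_left₀ (by linarith) (Real.one_sub_le_exp_neg x) k
    _ = Real.exp (-(k * x)) := by rw [← Real.exp_nat_mul]; ring_nf
    _ ≤ Real.exp (-(1 / 2)) := Real.exp_le_exp.2 (by linarith)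
    _ ≤ 2 / 3 := by
        rw [Real.exp_neg, inv_le_comm₀ (Real.exp_pos _) (by norm_num)]
        linarith [Real.add_one_le_exp (1 / 2 : ℝ)]

section Sampling

variable {V : Type*} [Fintype V]

def bernoulliWeight (σ : ℝ) (f : V → Bool) : ℝ := ∏ v, if f v then σ else 1 - σ

theorem bernoulliWeight_nonneg {σ : ℝ} (hσ₀ : 0 ≤ σ) (hσ₁ : σ ≤ 1) (f : V → Bool) :
    0 ≤ bernoulliWeight σ f :=
  prod_nonneg fun v _ => by split_ifs <;> linarith

variable [DecidableEq V]

theorem sum_bernoulliWeight_mul_prod (σ : ℝ) (h : V → Bool → ℝ) :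
    ∑ f, bernoulliWeight σ f * ∏ v, h v (f v)
      = ∏ v, (σ * h v true + (1 - σ) * h v false) := by
  simp only [bernoulliWeight, ← prod_mul_distrib]
  rw [← Fintype.prod_sum (fun v b => (if b then σ else 1 - σ) * h v b)]
  simp

theorem sum_bernoulliWeight (σ : ℝ) : ∑ f : V → Bool, bernoulliWeight σ f = 1 := by
  simpa using sum_bernoulliWeight_mul_prod (V := V) σ fun _ _ => 1

theorem sum_bernoulliWeight_mul_card (σ : ℝ) :
    ∑ f : V → Bool, bernoulliWeight σ f * #{v | f v} = σ * Fintype.card V := by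
  have hv (v₀ : V) : ∑ f : V → Bool, bernoulliWeight σ f * (if f v₀ then 1 else 0) = σ := by
    let h : V → Bool → ℝ := fun v b => if v = v₀ then (if b then 1 else 0) else 1
    calc ∑ f : V → Bool, bernoulliWeight σ f * (if f v₀ then 1 else 0)
        = ∑ f, bernoulliWeight σ f * ∏ v, h v (f v) := by
          simp only [h, prod_ite_eq', mem_univ, if_true]
      _ = ∏ v, if v = v₀ then σ else 1 := by
        rw [sum_bernoulliWeight_mul_prod]
        exact prod_congr rfl fun v _ => by by_cases hv : v = v₀ <;> simp [h, hv]
      _ = σ := by simp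
  simp_rw [card_filter, Nat.cast_sum, mul_sum]
  rw [sum_comm]
  simp only [Nat.cast_ite, Nat.cast_one, Nat.cast_zero, hv, sum_const, card_univ, nsmul_eq_mul]
  ring

theorem sum_bernoulliWeight_mul_prod_of_injOn {ι : Type*} (σ : ℝ) (key : ι → V)
    {M : Finset ι} (hkey : Set.InjOn key M) (h : ι → Bool → ℝ) :
    ∑ f, bernoulliWeight σ f * ∏ e ∈ M, h e (f (key e))
      = ∏ e ∈ M, (σ * h e true + (1 - σ) * h e false) := by
  classical
  have hfiber (g : ι → Bool → ℝ) (f : V → Bool) :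
      ∏ e ∈ M, g e (f (key e)) = ∏ v, ∏ e ∈ M with key e = v, g e (f v) := by
    rw [← prod_fiberwise_of_maps_to (fun e (_ : e ∈ M) => mem_univ (key e))]
    exact prod_congr rfl fun v _ => prod_congr rfl fun e he => by rw [(mem_filter.1 he).2]
  have hsingle (v : V) :
      σ * ∏ e ∈ M with key e = v, h e true + (1 - σ) * ∏ e ∈ M with key e = v, h e false
        = ∏ e ∈ M with key e = v, (σ * h e true + (1 - σ) * h e false) := by
    rcases (M.filter (key · = v)).eq_empty_or_nonempty with hempty | ⟨e, he⟩
    · simp only [hempty, prod_empty]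
      ring
    · rw [mem_filter] at he
      have : M.filter (key · = v) = {e} := eq_singleton_iff_unique_mem.2 ⟨mem_filter.2 he,
        fun e' he' => hkey (mem_filter.1 he').1 he.1 ((mem_filter.1 he').2.trans he.2.symm)⟩
      simp only [this, prod_singleton]
  simp_rw [hfiber h]
  rw [sum_bernoulliWeight_mul_prod σ fun v b => ∏ e ∈ M with key e = v, h e b]
  simp_rw [hsingle]
  exact prod_fiberwise_of_maps_to (fun e (_ : e ∈ M) => mem_univ (key e)) _

theorem sum_bernoulliWeight_mul_hit {U : Type*} [Fintype U] [DecidableEq U] (σ : ℝ)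
    {M : Finset (V × U)} (hM : IsMatching M) :
    ∑ f : V → Bool, ∑ g : U → Bool, bernoulliWeight σ f * bernoulliWeight σ g *
      (if ∃ e ∈ M, f e.1 ∧ g e.2 then 1 else 0) = 1 - (1 - σ ^ 2) ^ #M := by
  have hmiss (f : V → Bool) (g : U → Bool) : (if ∃ e ∈ M, f e.1 ∧ g e.2 then (1 : ℝ) else 0)
      = 1 - ∏ e ∈ M, if f e.1 ∧ g e.2 then 0 else 1 := by
    split_ifs with h
    · obtain ⟨e, he, hfg⟩ := h
      rw [prod_eq_zero (f := fun e : V × U => if f e.1 ∧ g e.2 then (0 : ℝ) else 1) he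
        (if_pos hfg), sub_zero]
    · rw [prod_eq_one fun e he => if_neg fun hfg => h ⟨e, he, hfg⟩, sub_self]
  -- The edges of a matching have distinct endpoints on each side, so averaging over `f` and
  -- then over `g` factorises over the edges.
  have hf (g : U → Bool) : ∑ f : V → Bool, bernoulliWeight σ f *
      ∏ e ∈ M, (if f e.1 ∧ g e.2 then 0 else 1) = ∏ e ∈ M, if g e.2 then 1 - σ else 1 := by
    have := sum_bernoulliWeight_mul_prod_of_injOn σ Prod.fst hM.1
      fun e b => if b ∧ g e.2 then (0 : ℝ) else 1
    simp only at this
    rw [this]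
    exact prod_congr rfl fun e _ => by cases g e.2 <;> simp
  have hg : ∑ g : U → Bool, bernoulliWeight σ g *
      ∏ e ∈ M, (if g e.2 then 1 - σ else 1) = (1 - σ ^ 2) ^ #M := by
    have := sum_bernoulliWeight_mul_prod_of_injOn σ Prod.snd hM.2
      fun _ b => if b then 1 - σ else 1
    simp only at this
    rw [this, prod_const]
    congr 1
    simp only [if_true, Bool.false_eq_true, if_false]
    ring
  rw [sum_comm]
  calc ∑ g : U → Bool, ∑ f : V → Bool, bernoulliWeight σ f * bernoulliWeight σ g *
        (if ∃ e ∈ M, f e.1 ∧ g e.2 then 1 else 0)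
      = ∑ g : U → Bool, bernoulliWeight σ g * (∑ f : V → Bool, bernoulliWeight σ f -
          ∑ f : V → Bool, bernoulliWeight σ f * ∏ e ∈ M, if f e.1 ∧ g e.2 then 0 else 1) := by
        refine sum_congr rfl fun g _ => ?_
        rw [mul_sub, mul_sum, mul_sum, ← sum_sub_distrib]
        exact sum_congr rfl fun f _ => by rw [hmiss]; ring
    _ = 1 - (1 - σ ^ 2) ^ #M := by
        simp_rw [hf, sum_bernoulliWeight, mul_sub, mul_one, sum_sub_distrib, sum_bernoulliWeight,
          hg]

theorem sum_bernoulliWeight_mul_card_add {U : Type*} [Fintype U] [DecidableEq U] (σ : ℝ) :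
    ∑ f : V → Bool, ∑ g : U → Bool, bernoulliWeight σ f * bernoulliWeight σ g *
      (#{v | f v} + #{u | g u} : ℝ) = σ * (Fintype.card V + Fintype.card U) := by
  have h₁ : ∑ f : V → Bool, ∑ g : U → Bool, bernoulliWeight σ f * bernoulliWeight σ g *
      (#{v | f v} : ℝ) = (∑ f : V → Bool, bernoulliWeight σ f * #{v | f v}) *
        ∑ g : U → Bool, bernoulliWeight σ g := by
    rw [sum_mul_sum]
    exact sum_congr rfl fun f _ => sum_congr rfl fun g _ => by ring
  have h₂ : ∑ f : V → Bool, ∑ g : U → Bool, bernoulliWeight σ f * bernoulliWeight σ g *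
      (#{u | g u} : ℝ) = (∑ f : V → Bool, bernoulliWeight σ f) *
        ∑ g : U → Bool, bernoulliWeight σ g * #{u | g u} := by
    rw [sum_mul_sum]
    exact sum_congr rfl fun f _ => sum_congr rfl fun g _ => by ring
  simp_rw [mul_add, sum_add_distrib]
  rw [h₁, h₂, sum_bernoulliWeight_mul_card, sum_bernoulliWeight_mul_card, sum_bernoulliWeight,
    sum_bernoulliWeight]
  ring

theorem card_div_three_le_of_sampling {U ι : Type*} [Fintype U] [DecidableEq U] [Fintype ι]
    {σ : ℝ} (hσ₀ : 0 ≤ σ) (hσ₁ : σ ≤ 1) (M : ι → Finset (V × U)) (hM : ∀ i, IsMatching (M i))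
    (hmiss : ∀ i, (1 - σ ^ 2) ^ #(M i) ≤ 2 / 3) (c : ℝ)
    (hcost : ∀ (f : V → Bool) (g : U → Bool),
      (#{i | ∃ e ∈ M i, f e.1 ∧ g e.2} : ℝ) ≤ c * (#{v | f v} + #{u | g u})) :
    (Fintype.card ι : ℝ) / 3 ≤ c * σ * (Fintype.card V + Fintype.card U) := by
  set w : (V → Bool) → (U → Bool) → ℝ := fun f g => bernoulliWeight σ f * bernoulliWeight σ g
  have hw f g : 0 ≤ w f g :=
    mul_nonneg (bernoulliWeight_nonneg hσ₀ hσ₁ f) (bernoulliWeight_nonneg hσ₀ hσ₁ g)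
  calc (Fintype.card ι : ℝ) / 3 = ∑ _i : ι, (1 / 3 : ℝ) := by simp [div_eq_mul_inv]
    _ ≤ ∑ i, ∑ f, ∑ g, w f g * (if ∃ e ∈ M i, f e.1 ∧ g e.2 then 1 else 0) := by
        gcongr with i
        rw [sum_bernoulliWeight_mul_hit σ (hM i)]
        linarith [hmiss i]
    _ = ∑ f, ∑ g, w f g * #{i | ∃ e ∈ M i, f e.1 ∧ g e.2} := by
        rw [sum_comm]
        refine sum_congr rfl fun f _ => ?_
        rw [sum_comm]
        simp_rw [← mul_sum, sum_boole]
    _ ≤ ∑ f, ∑ g, w f g * (c * (#{v | f v} + #{u | g u})) :=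
        sum_le_sum fun f _ => sum_le_sum fun g _ => mul_le_mul_of_nonneg_left (hcost f g) (hw f g)
    _ = c * σ * (Fintype.card V + Fintype.card U) := by
        simp_rw [mul_left_comm _ c, ← mul_sum, w, sum_bernoulliWeight_mul_card_add]
        ring

theorem card_le_mul_sqrt_of_isMatching {U ι : Type*} [Fintype U] [DecidableEq U] [Fintype ι]
    {m : ℕ} (hm : 0 < m) (hV : (Fintype.card V : ℝ) ≤ 2 * m) (hU : (Fintype.card U : ℝ) ≤ 2 * m)
    (M : ι → Finset (V × U)) (hM : ∀ i, IsMatching (M i)) (hMcard : ∀ i, (m : ℝ) ≤ 2 * #(M i))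
    {c : ℝ} (hc : 0 ≤ c) (hcost : ∀ (f : V → Bool) (g : U → Bool),
      (#{i | ∃ e ∈ M i, f e.1 ∧ g e.2} : ℝ) ≤ c * (#{v | f v} + #{u | g u})) :
    (Fintype.card ι : ℝ) ≤ 12 * c * √m := by
  have hm₁ : (1 : ℝ) ≤ m := by exact_mod_cast hm
  have hsample := card_div_three_le_of_sampling (σ := (√m)⁻¹) (by positivity)
    (inv_le_one_of_one_le₀ (Real.one_le_sqrt.2 hm₁)) M hM (fun i => by
      rw [inv_pow, Real.sq_sqrt (by positivity)]
      refine one_sub_pow_le_two_thirds (inv_le_one_of_one_le₀ hm₁) ?_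
      rw [← div_eq_mul_inv, le_div_iff₀ (by positivity)]
      linarith [hMcard i])
    c hcost
  calc (Fintype.card ι : ℝ) ≤ 3 * (c * (√m)⁻¹ * (4 * m)) := by
        nlinarith [mul_le_mul_of_nonneg_left (add_le_add hV hU)
          (by positivity : (0 : ℝ) ≤ c * (√m)⁻¹)]
    _ = 12 * c * (m / √m) := by ring
    _ = 12 * c * √m := by rw [Real.div_sqrt]

end Sampling

section Splitting

variable {α β : Type*}

noncomputable def splitCount (m : ℕ) (p : α → ℝ) (a : α) : ℕ := max 1 ⌈m * p a⌉₊

variable {m : ℕ} {p : α → ℝ}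

theorem splitCount_pos (a : α) : 0 < splitCount m p a := by
  simp [splitCount]

theorem mul_le_splitCount (a : α) : m * p a ≤ splitCount m p a :=
  (Nat.le_ceil _).trans (by exact_mod_cast le_max_right 1 _)

theorem splitCount_le (a : α) (hp : 0 ≤ p a) : (splitCount m p a : ℝ) ≤ m * p a + 1 := by
  rcases le_total ⌈m * p a⌉₊ 1 with h | h
  · rw [splitCount, max_eq_left h, Nat.cast_one]
    have : 0 ≤ (m : ℝ) * p a := by positivity
    linarith
  · rw [splitCount, max_eq_right h]
    exact (Nat.ceil_lt_add_one (by positivity)).le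

theorem div_splitCount_le (hm : 0 < m) (a : α) : p a / splitCount m p a ≤ 1 / m := by
  rw [div_le_div_iff₀ (by exact_mod_cast splitCount_pos a) (by exact_mod_cast hm)]
  linarith [mul_le_splitCount (m := m) (p := p) a]

variable [Fintype α] [Fintype β]

theorem card_sigma_splitCount_le (hα : Fintype.card α ≤ m) (hp : ∀ a, 0 ≤ p a)
    (hsum : ∑ a, p a = 1) : (Fintype.card (Σ a, Fin (splitCount m p a)) : ℝ) ≤ 2 * m := by
  simp only [Fintype.card_sigma, Fintype.card_fin, Nat.cast_sum]
  calc ∑ a, (splitCount m p a : ℝ) ≤ ∑ a, (m * p a + 1) :=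
        sum_le_sum fun a _ => splitCount_le a (hp a)
    _ = m + Fintype.card α := by rw [sum_add_distrib, ← mul_sum, hsum]; simp
    _ ≤ 2 * m := by linarith [(Nat.cast_le (α := ℝ)).2 hα]

theorem sum_sigma_div_splitCount (f : α → ℝ) :
    ∑ x : Σ a, Fin (splitCount m p a), f x.1 / splitCount m p x.1 = ∑ a, f a := by
  rw [Fintype.sum_sigma]
  refine sum_congr rfl fun a _ => ?_
  have : (splitCount m p a : ℝ) ≠ 0 := by exact_mod_cast (splitCount_pos a).ne'
  simp [field]

theorem exists_isMatching_of_coupling (hm : 0 < m) {p₁ : α → ℝ} {p₂ : β → ℝ} (D : α → β → ℝ)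
    (hD : ∀ a b, 0 ≤ D a b) (hrow : ∀ a, ∑ b, D a b = p₁ a) (hcol : ∀ b, ∑ a, D a b = p₂ b)
    (hsum : ∑ a, p₁ a = 1) :
    ∃ M : Finset ((Σ a, Fin (splitCount m p₁ a)) × (Σ b, Fin (splitCount m p₂ b))),
      IsMatching M ∧ (∀ e ∈ M, D e.1.1 e.2.1 ≠ 0) ∧ (m : ℝ) ≤ 2 * #M := by
  -- Spread the mass of `D a b` evenly over the copies of `a` and of `b`: every copy then
  -- carries mass at most `1 / m` on either side.
  set W : (Σ a, Fin (splitCount m p₁ a)) → (Σ b, Fin (splitCount m p₂ b)) → ℝ :=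
    fun x y => D x.1 y.1 / splitCount m p₁ x.1 / splitCount m p₂ y.1
  have hmr : (0 : ℝ) < m := by exact_mod_cast hm
  have hWrow x : ∑ y, W x y = p₁ x.1 / splitCount m p₁ x.1 := by
    rw [sum_sigma_div_splitCount (fun b => D x.1 b / splitCount m p₁ x.1), ← sum_div, hrow]
  have hWcol y : ∑ x, W x y = p₂ y.1 / splitCount m p₂ y.1 := by
    simp only [W, div_right_comm _ (splitCount m p₁ _ : ℝ)]
    rw [sum_sigma_div_splitCount (fun a => D a y.1 / splitCount m p₂ y.1), ← sum_div, hcol]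
  have hW x y : 0 ≤ W x y := by positivity [hD x.1 y.1]
  have h1 x : ∑ y, W x y ≤ 1 / m := by rw [hWrow]; exact div_splitCount_le hm x.1
  have h2 y : ∑ x, W x y ≤ 1 / m := by rw [hWcol]; exact div_splitCount_le hm y.1
  obtain ⟨M, hM, hMD, htot⟩ := exists_isMatching_sum_le W hW (1 / m) h1 h2
  refine ⟨M, hM, fun e he hD0 => hMD e he (by simp [W, hD0]), ?_⟩
  simp_rw [hWrow, sum_sigma_div_splitCount, hsum] at htot
  calc (m : ℝ) ≤ m * (2 * (1 / m) * #M) := le_mul_of_one_le_right hmr.le htot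
    _ = 2 * #M := by field_simp

end Splitting

theorem two_pow_card_le_card_of_recover {ι β : Type*} [Fintype β] (Φ : (ι → Bool) → β)
    (I : Finset ι) (h : ∀ i ∈ I, ∃ dec : β → Bool, ∀ x, dec (Φ x) = x i) :
    2 ^ #I ≤ Fintype.card β := by
  classical
  choose dec hdec using h
  let extend (y : I → Bool) : ι → Bool := fun i => if hi : i ∈ I then y ⟨i, hi⟩ else false
  have hinj : Function.Injective fun y => Φ (extend y) := by
    intro y y' hyy'
    funext i
    have h₁ := hdec i.1 i.2 (extend y)
    have h₂ := hdec i.1 i.2 (extend y')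
    simp only [hyy', extend, i.2, dite_true] at h₁ h₂
    exact h₁.symm.trans h₂
  simpa using Fintype.card_le_of_injective _ hinj

theorem card_le_of_recover {ι V U : Type*} {ℓ : ℕ} (A₁ : (ι → Bool) → V → Fin ℓ → Bool)
    (A₂ : (ι → Bool) → U → Fin ℓ → Bool) (S₁ : Finset V) (S₂ : Finset U) (I : Finset ι)
    (h : ∀ i ∈ I, ∃ a ∈ S₁, ∃ b ∈ S₂, ∃ dec : (Fin ℓ → Bool) → (Fin ℓ → Bool) → Bool,
      ∀ x, dec (A₁ x a) (A₂ x b) = x i) :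
    #I ≤ ℓ * (#S₁ + #S₂) := by
  classical
  have := two_pow_card_le_card_of_recover
    (fun x => ((fun a : S₁ => A₁ x a), (fun b : S₂ => A₂ x b))) I fun i hi => by
      obtain ⟨a, ha, b, hb, dec, hdec⟩ := h i hi
      exact ⟨fun φ => dec (φ.1 ⟨a, ha⟩) (φ.2 ⟨b, hb⟩), hdec⟩
  simp only [Fintype.card_prod, Fintype.card_fun, Fintype.card_coe, Fintype.card_bool,
    Fintype.card_fin, ← pow_mul, ← pow_add] at this
  rw [mul_add]
  exact (Nat.pow_le_pow_iff_right one_lt_two).1 this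

theorem eq_of_half_sum_abs_sub_nonpos {γ : Type*} [Fintype γ] {F G : γ → ℝ}
    (h : 1 / 2 * ∑ c, |F c - G c| ≤ 0) : F = G := by
  have h0 : ∑ c, |F c - G c| = 0 :=
    le_antisymm (by linarith) (sum_nonneg fun c _ => abs_nonneg _)
  funext c
  exact sub_eq_zero.1 (abs_eq_zero.1 ((sum_eq_zero_iff_of_nonneg fun c _ => abs_nonneg _).1 h0 c
    (mem_univ c)))

namespace PIRScheme

variable {n t ℓ : ℕ} (P : PIRScheme n t ℓ)

def queryDist (q : Fin n → Fin P.R → Fin t → Bool) (i : Fin n) (a : Fin t → Bool) : ℝ :=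
  ∑ r with q i r = a, P.pr r

def jointQueryDist (i : Fin n) (a b : Fin t → Bool) : ℝ :=
  ∑ r with P.q1 i r = a ∧ P.q2 i r = b, P.pr r

variable {P}

theorem queryDist_nonneg (hP : P.ProbDist) (q : Fin n → Fin P.R → Fin t → Bool) (i : Fin n)
    (a : Fin t → Bool) : 0 ≤ P.queryDist q i a :=
  sum_nonneg fun r _ => hP.1 r

theorem jointQueryDist_nonneg (hP : P.ProbDist) (i : Fin n) (a b : Fin t → Bool) :
    0 ≤ P.jointQueryDist i a b :=
  sum_nonneg fun r _ => hP.1 r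

theorem sum_queryDist (hP : P.ProbDist) (q : Fin n → Fin P.R → Fin t → Bool) (i : Fin n) :
    ∑ a, P.queryDist q i a = 1 := by
  rw [← hP.2]
  exact sum_fiberwise univ (q i) P.pr

theorem sum_jointQueryDist_right (i : Fin n) (a : Fin t → Bool) :
    ∑ b, P.jointQueryDist i a b = P.queryDist P.q1 i a := by
  simp only [jointQueryDist, queryDist, ← filter_filter]
  exact sum_fiberwise _ (P.q2 i) P.pr

theorem sum_jointQueryDist_left (i : Fin n) (b : Fin t → Bool) :
    ∑ a : Fin t → Bool, P.jointQueryDist i a b = P.queryDist P.q2 i b := by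
  simp only [jointQueryDist, queryDist, and_comm (a := P.q1 i _ = _), ← filter_filter]
  exact sum_fiberwise _ (P.q1 i) P.pr

theorem queryDist_eq_of_secure (hS : P.Secure 0) (i j : Fin n) :
    P.queryDist P.q1 i = P.queryDist P.q1 j ∧ P.queryDist P.q2 i = P.queryDist P.q2 j :=
  ⟨eq_of_half_sum_abs_sub_nonpos (hS i j).1, eq_of_half_sum_abs_sub_nonpos (hS i j).2⟩

theorem out_eq_of_pr_ne_zero (hP : P.ProbDist) (hC : P.Correct (1 / 2)) {r : Fin P.R}
    (hr : P.pr r ≠ 0) (x : Fin n → Bool) (i : Fin n) :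
    P.out i r (P.ans1 x (P.q1 i r)) (P.ans2 x (P.q2 i r)) = x i := by
  by_contra hwrong
  have hsplit := sum_filter_add_sum_filter_not univ
    (fun r => P.out i r (P.ans1 x (P.q1 i r)) (P.ans2 x (P.q2 i r)) = x i) P.pr
  have hbad :
      ∑ r with ¬P.out i r (P.ans1 x (P.q1 i r)) (P.ans2 x (P.q2 i r)) = x i, P.pr r ≤ 0 := by
    linarith [hC x i, hP.2]
  exact hr (le_antisymm ((single_le_sum (fun r _ => hP.1 r)
    (mem_filter.2 ⟨mem_univ r, hwrong⟩)).trans hbad) (hP.1 r))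

theorem exists_decoder_of_jointQueryDist_ne_zero (hP : P.ProbDist) (hC : P.Correct (1 / 2))
    {i : Fin n} {a b : Fin t → Bool} (h : P.jointQueryDist i a b ≠ 0) :
    ∃ dec : (Fin ℓ → Bool) → (Fin ℓ → Bool) → Bool,
      ∀ x, dec (P.ans1 x a) (P.ans2 x b) = x i := by
  obtain ⟨r, hr, hpr⟩ := exists_ne_zero_of_sum_ne_zero h
  obtain ⟨rfl, rfl⟩ := (mem_filter.1 hr).2
  exact ⟨P.out i r, fun x => out_eq_of_pr_ne_zero hP hC hpr x i⟩

theorem card_hit_le (hP : P.ProbDist) (hC : P.Correct (1 / 2)) {V U : Type*} [Fintype V]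
    [Fintype U] (π₁ : V → Fin t → Bool) (π₂ : U → Fin t → Bool) (M : Fin n → Finset (V × U))
    (hM : ∀ i, ∀ e ∈ M i, P.jointQueryDist i (π₁ e.1) (π₂ e.2) ≠ 0) (f : V → Bool)
    (g : U → Bool) :
    (#{i | ∃ e ∈ M i, f e.1 ∧ g e.2} : ℝ) ≤ ℓ * (#{v | f v} + #{u | g u}) := by
  exact_mod_cast card_le_of_recover (fun x v => P.ans1 x (π₁ v))
    (fun x u => P.ans2 x (π₂ u)) _ _ _ fun i hi => by
      obtain ⟨e, he, hfe, hge⟩ := (mem_filter.1 hi).2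
      exact ⟨e.1, mem_filter.2 ⟨mem_univ _, hfe⟩, e.2, mem_filter.2 ⟨mem_univ _, hge⟩,
        exists_decoder_of_jointQueryDist_ne_zero hP hC (hM i e he)⟩

end PIRScheme

theorem two_mul_logb_sub_le {x : ℝ} {t : ℕ} (hx : 0 < x) (h : x ≤ 12 * √(2 ^ t)) :
    2 * Real.logb 2 x - 8 ≤ t := by
  have hsq : x ^ 2 ≤ 2 ^ (t + 8) := calc
    x ^ 2 ≤ (12 * √(2 ^ t)) ^ 2 := pow_le_pow_left₀ hx.le h 2
    _ = 144 * 2 ^ t := by rw [mul_pow, Real.sq_sqrt (by positivity)]; norm_num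
    _ ≤ 2 ^ (t + 8) := by rw [pow_add]; nlinarith [pow_pos (two_pos (α := ℝ)) t]
  have := Real.logb_le_logb_of_le (b := 2) one_lt_two (pow_pos hx 2) hsq
  rw [Real.logb_pow, Real.logb_pow, Real.logb_self_eq_one one_lt_two] at this
  push_cast at this
  linarith

/-- Katz–Trevisan PIR bound, Theorem 13 of the paper: there is a
universal constant `K` such that every one-round 2-server PIR scheme with `n`-bit
databases (`n, t, ℓ ≥ 1`), perfect recovery and perfect privacy satisfies
`t ≥ 2 log₂(n/ℓ) - K`. -/
theorem stmt17 :
    ∃ K : ℝ,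
      ∀ (n t ℓ : ℕ), 1 ≤ n → 1 ≤ t → 1 ≤ ℓ →
        ∀ P : PIRScheme n t ℓ,
          P.ProbDist → P.Correct (1 / 2) → P.Secure 0 →
          2 * Real.logb 2 ((n : ℝ) / ℓ) - K ≤ t := by
  refine ⟨8, fun n t ℓ hn _ hℓ P hP hC hS => ?_⟩
  let i₀ : Fin n := ⟨0, hn⟩
  let m := Fintype.card (Fin t → Bool)
  have hm : 0 < m := Fintype.card_pos
  choose M hM hMD hMcard using fun i => exists_isMatching_of_coupling hm (P.jointQueryDist i)
    (P.jointQueryDist_nonneg hP i)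
    (fun a => by rw [P.sum_jointQueryDist_right, (P.queryDist_eq_of_secure hS i i₀).1])
    (fun b => by rw [P.sum_jointQueryDist_left, (P.queryDist_eq_of_secure hS i i₀).2])
    (P.sum_queryDist hP P.q1 i₀)
  have key := card_le_mul_sqrt_of_isMatching hm
    (card_sigma_splitCount_le le_rfl (P.queryDist_nonneg hP P.q1 i₀) (P.sum_queryDist hP P.q1 i₀))
    (card_sigma_splitCount_le le_rfl (P.queryDist_nonneg hP P.q2 i₀) (P.sum_queryDist hP P.q2 i₀))
    M hM hMcard (Nat.cast_nonneg ℓ) (P.card_hit_le hP hC Sigma.fst Sigma.fst M hMD)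
  apply two_mul_logb_sub_le (by positivity)
  rw [div_le_iff₀ (by positivity)]
  simpa [m, mul_right_comm] using key
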